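/- arXiv:2206.01568 — 2 statements merged into one kernel-verified Lean document; each statement's English description precedes it below -/
import Mathlib

section
/- Let S_1,...,S_n be subsets of [n] with i ∈ S_i and |S_i| = b for all i. Let c : [n] → [C] be a coloring such that any two distinct elements lying in a common set S_i receive different colors. Let {X_1,...,X_C} be pairwise independent Bernoulli random variables with Pr[X_c = 1] = p = b^{-1/5}. Define L to contain every element i with X_{c(i)} = 1, and additionally, for every set S_i with Σ_{j ∈ S_i} X_{c(j)} = 0, the element i. Then L is a hitting set (L ∩ S_i ≠ ∅ for all i) and E[|L|] ≤ n(b^{-1/5} + b^{-4/5}). -/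
/-!
Every set `S i` is hit: either some `j ∈ S i` has `X (c j) = 1`, or `i ∈ S i` itself was added.
An element `i` lies in `L` only if `X (c i) = 1` (probability `p`) or `S i` is unhit. Since `c` is
injective on `S i`, the `b` summands of `∑ j ∈ S i, X (c j)` are pairwise independent, so the
variance of this sum is at most its mean `b p`, and Chebyshev's inequality bounds the probability
that it vanishes by `1 / (b p) = b ^ (-4/5)`.
-/

open MeasureTheory ProbabilityTheory
open scoped Classical

section

variable {Ω : Type*} {mΩ : MeasurableSpace Ω} {μ : Measure Ω}

lemma integral_eq_measureReal_of_zero_or_one {X : Ω → ℝ} (hX_meas : Measurable X)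
    (h01 : ∀ ω, X ω = 0 ∨ X ω = 1) :
    μ[X] = μ.real {ω | X ω = 1} := by
  have hX : X = {ω | X ω = 1}.indicator 1 := by
    funext ω
    rcases h01 ω with h | h <;> simp [h]
  nth_rw 1 [hX]
  exact integral_indicator_one (hX_meas (measurableSet_singleton 1))

lemma measureReal_sum_eq_zero_le_inv [IsProbabilityMeasure μ] {ι : Type*} {s : Finset ι}
    {Y : ι → Ω → ℝ} (hY : ∀ i ∈ s, Measurable (Y i))
    (hY01 : ∀ i ∈ s, ∀ ω, Y i ω ∈ Set.Icc (0 : ℝ) 1)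
    (hindep : Set.Pairwise ↑s fun i j => Y i ⟂ᵢ[μ] Y j) (hpos : 0 < ∑ i ∈ s, μ[Y i]) :
    μ.real {ω | ∑ i ∈ s, Y i ω = 0} ≤ (∑ i ∈ s, μ[Y i])⁻¹ := by
  set m := ∑ i ∈ s, μ[Y i]
  have hL2 : ∀ i ∈ s, MemLp (Y i) 2 μ := fun i hi =>
    memLp_of_bounded (ae_of_all _ (hY01 i hi)) (hY i hi).aestronglyMeasurable 2
  have hmean : μ[∑ i ∈ s, Y i] = m := by
    simp only [Finset.sum_apply]
    exact integral_finsetSum s fun i hi => (hL2 i hi).integrable one_le_two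
  have hvar : variance (∑ i ∈ s, Y i) μ ≤ m := by
    rw [IndepFun.variance_sum hL2 hindep]
    refine Finset.sum_le_sum fun i hi => ?_
    have hmean_nonneg : 0 ≤ μ[Y i] := integral_nonneg fun ω => (hY01 i hi ω).1
    calc variance (Y i) μ ≤ (1 - μ[Y i]) * (μ[Y i] - 0) :=
          variance_le_sub_mul_sub (ae_of_all _ (hY01 i hi)) (hY i hi).aemeasurable
      _ ≤ μ[Y i] := by nlinarith
  have hsub : {ω | ∑ i ∈ s, Y i ω = 0} ⊆ {ω | m ≤ |(∑ i ∈ s, Y i) ω - μ[∑ i ∈ s, Y i]|} := by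
    intro ω hω
    rw [Set.mem_ofPred_eq, Finset.sum_apply, hω, hmean, zero_sub, abs_neg, abs_of_pos hpos]
  calc μ.real {ω | ∑ i ∈ s, Y i ω = 0}
      ≤ μ.real {ω | m ≤ |(∑ i ∈ s, Y i) ω - μ[∑ i ∈ s, Y i]|} := measureReal_mono hsub
    _ ≤ variance (∑ i ∈ s, Y i) μ / m ^ 2 :=
        ENNReal.toReal_le_of_le_ofReal (div_nonneg (variance_nonneg _ _) (sq_nonneg _))
          (meas_ge_le_variance_div_sq (memLp_finsetSum' s hL2) hpos)
    _ ≤ m / m ^ 2 := by gcongr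
    _ = m⁻¹ := by field_simp

lemma measureReal_forall_eq_zero_le_inv [IsProbabilityMeasure μ] {ι κ : Type*} {T : Finset ι}
    {c : ι → κ} (hc : Set.InjOn c T) {X : κ → Ω → ℝ} (hX : ∀ k, Measurable (X k))
    (h01 : ∀ k ω, X k ω = 0 ∨ X k ω = 1) {p : ℝ} (hp : ∀ k, μ.real {ω | X k ω = 1} = p)
    (hindep : ∀ k k', k ≠ k' → X k ⟂ᵢ[μ] X k') (hpos : 0 < T.card * p) :
    μ.real {ω | ∀ j ∈ T, X (c j) ω = 0} ≤ (T.card * p)⁻¹ := by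
  have hY01 : ∀ j ∈ T, ∀ ω, X (c j) ω ∈ Set.Icc (0 : ℝ) 1 := fun j _ ω => by
    rcases h01 (c j) ω with h | h <;> simp [h]
  have hmean : ∑ j ∈ T, μ[X (c j)] = T.card * p := by
    simp [integral_eq_measureReal_of_zero_or_one (hX _) (h01 _), hp]
  have hunhit : {ω | ∀ j ∈ T, X (c j) ω = 0} = {ω | ∑ j ∈ T, X (c j) ω = 0} := by
    ext ω
    simp [Finset.sum_eq_zero_iff_of_nonneg fun j hj => (hY01 j hj ω).1]
  rw [hunhit, ← hmean]
  exact measureReal_sum_eq_zero_le_inv (fun j _ => hX _) hY01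
    (fun j hj j' hj' hjj' => hindep _ _ fun h => hjj' (hc hj hj' h)) (hmean ▸ hpos)

lemma integral_card_filter_eq_sum_measureReal [IsFiniteMeasure μ] {ι : Type*} [Fintype ι]
    {P : ι → Ω → Prop} [∀ i ω, Decidable (P i ω)] (hP : ∀ i, MeasurableSet {ω | P i ω}) :
    ∫ ω, ((Finset.univ.filter fun i => P i ω).card : ℝ) ∂μ = ∑ i, μ.real {ω | P i ω} := by
  have hcard : ∀ ω, ((Finset.univ.filter fun i => P i ω).card : ℝ)
      = ∑ i, {ω | P i ω}.indicator 1 ω := fun ω => by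
    simp [Set.indicator_apply]
  simp only [hcard]
  rw [integral_finsetSum _ fun i _ => (integrable_const 1).indicator (hP i)]
  exact Finset.sum_congr rfl fun i _ => integral_indicator_one (hP i)

end

lemma inv_mul_rpow_neg_one_fifth {b : ℝ} (hb : 0 < b) :
    (b * b ^ (-(1/5 : ℝ)))⁻¹ = b ^ (-(4/5 : ℝ)) := by
  rw [← Real.rpow_one_add' hb.le (by norm_num), ← Real.rpow_neg hb.le]
  norm_num

/-- Hitting set via a coloring proper on each set and pairwise independent
Bernoulli(`b^{-1/5}`) variables per color: the set `L` (all `i` with `X_{c(i)} = 1`, plus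
`i` for every unhit set `S_i`) is a hitting set of expected size at most
`n (b^{-1/5} + b^{-4/5})`. -/
theorem stmt6 {Ω : Type*} [MeasureSpace Ω] [IsProbabilityMeasure (ℙ : Measure Ω)]
    (n b C : ℕ) (hb : 1 ≤ b)
    (S : Fin n → Finset (Fin n)) (hcard : ∀ i, (S i).card = b) (hmem : ∀ i, i ∈ S i)
    (c : Fin n → Fin C)
    (hcol : ∀ i : Fin n, ∀ j ∈ S i, ∀ j' ∈ S i, c j = c j' → j = j')
    (X : Fin C → Ω → ℝ) (hmeas : ∀ k, Measurable (X k))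
    (h01 : ∀ k ω, X k ω = 0 ∨ X k ω = 1)
    (hp : ∀ k, ℙ {ω | X k ω = 1} = ENNReal.ofReal ((b : ℝ) ^ (-(1/5 : ℝ))))
    (hindep : ∀ k k', k ≠ k' → IndepFun (X k) (X k') ℙ) :
    (∀ ω : Ω, ∀ i : Fin n, ∃ j ∈ S i,
        j ∈ Finset.univ.filter
          (fun i' : Fin n => X (c i') ω = 1 ∨ ∀ j' ∈ S i', X (c j') ω = 0)) ∧
    ∫ ω, ((Finset.univ.filter
        (fun i' : Fin n => X (c i') ω = 1 ∨ ∀ j' ∈ S i', X (c j') ω = 0)).card : ℝ)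
      ≤ (n : ℝ) * ((b : ℝ) ^ (-(1/5 : ℝ)) + (b : ℝ) ^ (-(4/5 : ℝ))) := by
  set p := (b : ℝ) ^ (-(1/5 : ℝ))
  have hb0 : (0 : ℝ) < b := by exact_mod_cast hb
  have hpX : ∀ k, (ℙ : Measure Ω).real {ω | X k ω = 1} = p := fun k => by
    rw [measureReal_def, hp k, ENNReal.toReal_ofReal (by positivity)]
  have hunhit : ∀ i,
      (ℙ : Measure Ω).real {ω | ∀ j ∈ S i, X (c j) ω = 0} ≤ (b : ℝ) ^ (-(4/5 : ℝ)) := by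
    intro i
    have h := measureReal_forall_eq_zero_le_inv (fun j hj j' hj' => hcol i j hj j' hj') hmeas
      h01 hpX hindep (by rw [hcard i]; positivity)
    rwa [hcard i, inv_mul_rpow_neg_one_fifth hb0] at h
  refine ⟨fun ω i => ?_, ?_⟩
  · by_cases hhit : ∃ j ∈ S i, X (c j) ω = 1
    · obtain ⟨j, hj, hXj⟩ := hhit
      exact ⟨j, hj, Finset.mem_filter.2 ⟨Finset.mem_univ _, Or.inl hXj⟩⟩
    · refine ⟨i, hmem i, Finset.mem_filter.2 ⟨Finset.mem_univ _, Or.inr fun j hj => ?_⟩⟩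
      exact (h01 (c j) ω).resolve_right fun h => hhit ⟨j, hj, h⟩
  · rw [integral_card_filter_eq_sum_measureReal fun i => by measurability]
    calc ∑ i, (ℙ : Measure Ω).real {ω | X (c i) ω = 1 ∨ ∀ j ∈ S i, X (c j) ω = 0}
        ≤ ∑ _i : Fin n, (p + (b : ℝ) ^ (-(4/5 : ℝ))) := Finset.sum_le_sum fun i _ => by
          rw [Set.ofPred_or]
          exact (measureReal_union_le _ _).trans (add_le_add (hpX _).le (hunhit i))
      _ = n * (p + (b : ℝ) ^ (-(4/5 : ℝ))) := by simp [mul_add]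
end

section
/- Let S_1,...,S_n ⊆ [n] with |S_i| = b and i ∈ S_i, let c : [n] → [C] be injective on each S_i, and let H be a pairwise independent family of hash functions h : [C] → {0,1}^ℓ with 2^ℓ = b^{1/5} (assumed an integer power of 2). For each h define L_h = {i : h(c(i)) = 0} ∪ {i : h(c(j)) ≠ 0 for all j ∈ S_i}. Then there exists h* ∈ H with |L_{h*}| ≤ n(b^{-1/5} + b^{-4/5}), and every L_h is a hitting set. -/
/-!
Write `q = 2^{-ℓ}` and `L_h = A_h ∪ B_h` with `A_h = {i : h(c(i)) = 0}` and
`B_h = {i : h(c(j)) ≠ 0 for all j ∈ S_i}`; every `L_h` hits every `S_i`, because either some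
`j ∈ S_i` is hashed to `0` or `i` itself lies in `B_h`. Each color is hashed to `0` with
probability `q`, so `E|A_h| = nq`. For fixed `i`, the number `X` of colors of `S_i` hashed to `0`
has `E X = bq =: μ` and, by pairwise independence, `E X² ≤ μ + μ²`; the second moment method
gives `P(X = 0) ≤ 1/μ`, hence `E|B_h| ≤ n/(bq)`. Some `h` does at least as well as the average,
and `q = b^{-1/5}`, `1/(bq) = b^{-4/5}`.
-/

section HashFamily

open Finset

variable {H α β : Type*} [Fintype H] [Fintype β] [DecidableEq β]

def IsPairwiseUniform (f : H → α → β) : Prop :=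
  ∀ a a', a ≠ a' → ∀ u v,
    (#{h | f h a = u ∧ f h a' = v} : ℝ) = Fintype.card H / Fintype.card β ^ 2

lemma card_filter_eq_zero_le_of_sum_sq_le (X : H → ℝ) {μ : ℝ}
    (hμ : 0 < μ) (h1 : ∑ h, X h = μ * Fintype.card H)
    (h2 : ∑ h, X h ^ 2 ≤ (μ + μ ^ 2) * Fintype.card H) :
    (#{h | X h = 0} : ℝ) ≤ Fintype.card H / μ := by
  have hzero : μ ^ 2 * #{h | X h = 0} ≤ ∑ h, (X h - μ) ^ 2 :=
    calc μ ^ 2 * (#{h | X h = 0} : ℝ) = ∑ h ∈ {h | X h = 0}, (X h - μ) ^ 2 := by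
          rw [sum_congr rfl fun h hh => by rw [(mem_filter.1 hh).2], sum_const, nsmul_eq_mul]
          ring
      _ ≤ ∑ h, (X h - μ) ^ 2 :=
          sum_le_sum_of_subset_of_nonneg (filter_subset _ _) fun _ _ _ => sq_nonneg _
  have hvar : ∑ h, (X h - μ) ^ 2 =
      ∑ h, X h ^ 2 - 2 * μ * ∑ h, X h + μ ^ 2 * Fintype.card H := by
    simp only [sub_sq, sum_add_distrib, sum_sub_distrib, ← sum_mul, sum_const, card_univ,
      nsmul_eq_mul]
    rw [← mul_sum]
    ring
  rw [le_div_iff₀ hμ]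
  nlinarith

namespace IsPairwiseUniform

variable {f : H → α → β}

lemma card_filter_apply_eq (hf : IsPairwiseUniform f) {a a' : α} (hne : a ≠ a') (u : β) :
    (#{h | f h a = u} : ℝ) = Fintype.card H / Fintype.card β := by
  have hβ : (Fintype.card β : ℝ) ≠ 0 := by have := Fintype.card_pos_iff.2 ⟨u⟩; positivity
  rw [card_eq_sum_card_fiberwise (f := fun h => f h a') (t := univ) fun _ _ => mem_univ _]
  push_cast
  simp_rw [filter_filter, hf a a' hne u, sum_const, card_univ, nsmul_eq_mul]
  field_simp

lemma sum_card_filter_eq (hf : IsPairwiseUniform f) {T : Finset α} (hT : 1 < #T) (u : β) :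
    ∑ h, (#{a ∈ T | f h a = u} : ℝ) = #T * (Fintype.card H / Fintype.card β) := by
  simp_rw [natCast_card_filter]
  rw [sum_comm]
  simp_rw [sum_boole]
  rw [← nsmul_eq_mul, ← sum_const]
  refine sum_congr rfl fun a _ => ?_
  obtain ⟨a', -, hne⟩ := exists_mem_ne hT a
  exact hf.card_filter_apply_eq hne.symm u

lemma sum_card_filter_sq_eq (hf : IsPairwiseUniform f) {T : Finset α} (hT : 1 < #T)
    (u : β) :
    ∑ h, (#{a ∈ T | f h a = u} : ℝ) ^ 2 =
      #T * (Fintype.card H / Fintype.card β)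
        + #T * (#T - 1) * (Fintype.card H / Fintype.card β ^ 2) := by
  have hrow : ∀ a ∈ T, ∑ a' ∈ T, (#{h | f h a = u ∧ f h a' = u} : ℝ) =
      Fintype.card H / Fintype.card β + (#T - 1) * (Fintype.card H / Fintype.card β ^ 2) := by
    intro a ha
    classical
    obtain ⟨a', -, hne⟩ := exists_mem_ne hT a
    rw [← add_sum_erase T _ ha,
      sum_congr rfl fun a' ha' => hf a a' (ne_of_mem_erase ha').symm u u]
    simp only [and_self, sum_const, card_erase_of_mem ha, nsmul_eq_mul,
      hf.card_filter_apply_eq hne.symm u]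
    rw [Nat.cast_sub (one_le_two.trans hT), Nat.cast_one]
  simp_rw [natCast_card_filter, sq, sum_mul_sum, ite_zero_mul_ite_zero, mul_one]
  rw [sum_comm]
  simp_rw [sum_comm (s := univ), sum_boole]
  rw [sum_congr rfl hrow, sum_const, nsmul_eq_mul]
  ring

lemma card_filter_forall_ne_le (hf : IsPairwiseUniform f) {T : Finset α} (hT : 1 < #T)
    (u : β) :
    (#{h | ∀ a ∈ T, f h a ≠ u} : ℝ) ≤ Fintype.card H * Fintype.card β / #T := by
  have hβ : (0 : ℝ) < Fintype.card β := by have := Fintype.card_pos_iff.2 ⟨u⟩; positivity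
  have hcongr : univ.filter (fun h => ∀ a ∈ T, f h a ≠ u) =
      univ.filter (fun h => (#{a ∈ T | f h a = u} : ℝ) = 0) :=
    filter_congr fun h _ => by rw [Nat.cast_eq_zero, card_eq_zero, filter_eq_empty_iff]
  rw [hcongr]
  refine (card_filter_eq_zero_le_of_sum_sq_le _ (μ := #T / Fintype.card β) (by positivity)
    ?_ ?_).trans_eq ?_
  · rw [hf.sum_card_filter_eq hT]
    ring
  · rw [hf.sum_card_filter_sq_eq hT]
    have : (0 : ℝ) ≤ #T * Fintype.card H / Fintype.card β ^ 2 := by positivity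
    field_simp
    nlinarith
  · field_simp

lemma card_filter_apply_eq_or_forall_ne_le (hf : IsPairwiseUniform f) {T : Finset α}
    (hT : 1 < #T) (a : α) (u : β) :
    (#{h | f h a = u ∨ ∀ a' ∈ T, f h a' ≠ u} : ℝ) ≤
      Fintype.card H * (1 / Fintype.card β + Fintype.card β / #T) := by
  classical
  obtain ⟨a', -, hne⟩ := exists_mem_ne hT a
  calc (#{h | f h a = u ∨ ∀ a' ∈ T, f h a' ≠ u} : ℝ)
      ≤ #{h | f h a = u} + #{h | ∀ a' ∈ T, f h a' ≠ u} := by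
        rw [filter_or]; exact_mod_cast card_union_le _ _
    _ ≤ Fintype.card H / Fintype.card β + Fintype.card H * Fintype.card β / #T := by
        rw [hf.card_filter_apply_eq hne.symm u]
        gcongr
        exact hf.card_filter_forall_ne_le hT u
    _ = _ := by ring

end IsPairwiseUniform

lemma exists_card_filter_le_of_forall_card_filter_le [Nonempty H] {ι : Type*} [Fintype ι]
    (R : H → ι → Prop) [∀ h i, Decidable (R h i)] {p : ℝ}
    (hR : ∀ i, (#{h | R h i} : ℝ) ≤ Fintype.card H * p) :
    ∃ h, (#{i | R h i} : ℝ) ≤ Fintype.card ι * p := by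
  classical
  obtain ⟨h, -, hh⟩ := exists_le_of_sum_le (univ_nonempty (α := H))
    (f := fun h => (#{i | R h i} : ℝ)) (g := fun _ => Fintype.card ι * p) <|
  calc ∑ h, (#{i | R h i} : ℝ) = ∑ i, (#{h | R h i} : ℝ) := by
        exact_mod_cast sum_card_bipartiteAbove_eq_sum_card_bipartiteBelow (s := univ) (t := univ) R
    _ ≤ ∑ _i : ι, Fintype.card H * p := sum_le_sum fun i _ => hR i
    _ = ∑ _h : H, Fintype.card ι * p := by simp only [sum_const, card_univ, nsmul_eq_mul]; ring
  exact ⟨h, hh⟩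

lemma IsPairwiseUniform.of_toMeasure_uniformOfFintype [Nonempty H] [MeasurableSpace H]
    [MeasurableSingletonClass H] {f : H → α → β}
    (hf : ∀ a a', a ≠ a' → ∀ u v,
      (PMF.uniformOfFintype H).toMeasure {h | f h a = u ∧ f h a' = v}
        = ((Fintype.card β : ENNReal) ^ 2)⁻¹) :
    IsPairwiseUniform f := by
  intro a a' hne u v
  have h := congrArg ENNReal.toReal (hf a a' hne u v)
  rw [PMF.toMeasure_uniformOfFintype_apply (s := {h | f h a = u ∧ f h a' = v})
      (Set.toFinite _).measurableSet, ENNReal.toReal_div, Fintype.card_subtype] at h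
  simp only [Set.mem_ofPred_eq, ENNReal.toReal_natCast, ENNReal.toReal_inv,
    ENNReal.toReal_pow] at h
  rw [div_eq_iff (by positivity)] at h
  rw [h]
  ring

end HashFamily

/-- Given sets `S_i ⊆ [n]` with `|S_i| = b`, `i ∈ S_i`, a coloring `c` injective on each
set, and a pairwise independent hash family `H` of functions `[C] → {0,1}^ℓ` with
`2^ℓ = b^{1/5}`, every `L_h = {i : h(c(i)) = 0} ∪ {i : ∀ j ∈ S_i, h(c(j)) ≠ 0}` is a
hitting set, and some `h*` gives `|L_{h*}| ≤ n (b^{-1/5} + b^{-4/5})`. -/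
theorem stmt17 (n b C ℓ : ℕ) (hb : 1 ≤ b)
    (hℓ : (2 : ℝ) ^ ℓ = (b : ℝ) ^ ((1 : ℝ) / 5))
    (S : Fin n → Finset (Fin n)) (hcard : ∀ i, (S i).card = b) (hmem : ∀ i, i ∈ S i)
    (c : Fin n → Fin C)
    (hinj : ∀ i : Fin n, ∀ j ∈ S i, ∀ j' ∈ S i, c j = c j' → j = j')
    {H : Type*} [Fintype H] [Nonempty H]
    [MeasurableSpace H] [MeasurableSingletonClass H]
    (f : H → Fin C → (Fin ℓ → Bool))
    (hpair : ∀ a b' : Fin C, a ≠ b' → ∀ u v : Fin ℓ → Bool,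
      (PMF.uniformOfFintype H).toMeasure {h | f h a = u ∧ f h b' = v}
        = ((2 : ENNReal) ^ (2 * ℓ))⁻¹) :
    (∀ h : H, ∀ i : Fin n, ∃ j ∈ S i,
        j ∈ Finset.univ.filter (fun i' : Fin n =>
          f h (c i') = (fun _ => false) ∨ ∀ j' ∈ S i', f h (c j') ≠ (fun _ => false))) ∧
    (∃ h : H,
        ((Finset.univ.filter (fun i' : Fin n =>
          f h (c i') = (fun _ => false) ∨
            ∀ j' ∈ S i', f h (c j') ≠ (fun _ => false))).card : ℝ)
          ≤ (n : ℝ) * ((b : ℝ) ^ (-(1/5 : ℝ)) + (b : ℝ) ^ (-(4/5 : ℝ)))) := by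
  refine ⟨fun h i => ?_, ?_⟩
  · by_cases hzero : ∃ j ∈ S i, f h (c j) = fun _ => false
    · obtain ⟨j, hj, hfj⟩ := hzero
      exact ⟨j, hj, Finset.mem_filter.2 ⟨Finset.mem_univ _, Or.inl hfj⟩⟩
    · push Not at hzero
      exact ⟨i, hmem i, Finset.mem_filter.2 ⟨Finset.mem_univ _, Or.inr hzero⟩⟩
  -- For `b = 1` the bound is `2n`; otherwise every `S_i` carries two colors, which is what lets
  -- pairwise uniformity control single colors.
  rcases hb.eq_or_lt with rfl | hb2
  · refine ⟨Classical.arbitrary H, ?_⟩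
    calc _ ≤ (n : ℝ) := by
          exact_mod_cast (Finset.card_filter_le _ _).trans_eq (Finset.card_fin n)
      _ ≤ _ := by
        rw [Nat.cast_one, Real.one_rpow, Real.one_rpow]
        linarith [n.cast_nonneg (α := ℝ)]
  have hf : IsPairwiseUniform f := .of_toMeasure_uniformOfFintype fun a a' hne u v => by
    rw [hpair a a' hne u v]
    simp [pow_mul']
  have hbound : ∀ i, ((Finset.univ.filter fun h => f h (c i) = (fun _ => false) ∨
      ∀ j' ∈ S i, f h (c j') ≠ (fun _ => false)).card : ℝ) ≤
      Fintype.card H * (1 / 2 ^ ℓ + 2 ^ ℓ / b) := by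
    intro i
    have hT : ((S i).image c).card = b := by
      rw [Finset.card_image_of_injOn (hinj i), hcard]
    have := hf.card_filter_apply_eq_or_forall_ne_le (hT ▸ hb2) (c i) (fun _ => false)
    simpa only [Finset.forall_mem_image, hT, Fintype.card_fun, Fintype.card_bool,
      Fintype.card_fin, Nat.cast_pow, Nat.cast_ofNat] using this
  obtain ⟨h, hh⟩ := exists_card_filter_le_of_forall_card_filter_le _ hbound
  refine ⟨h, hh.trans_eq ?_⟩
  have hb0 : (0 : ℝ) < b := by positivity
  rw [Fintype.card_fin, hℓ, one_div, ← Real.rpow_neg hb0.le, ← Real.rpow_sub_one hb0.ne']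
  norm_num
end
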